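/- arXiv:1910.08205 — 7 statements merged into one kernel-verified Lean document; each statement's English description precedes it below -/
import Mathlib

section
/- For real σ with 1 < σ ≤ 1.06, the Riemann zeta function satisfies ζ(σ) ≤ 0.6 + 1/(σ-1). -/
/-!
Write `ζ(σ) = 1 + ∑_{n ≥ 2} n^{-σ}`. By convexity of `u ↦ u^{-σ}`, each term `n^{-σ}` is at most
the integral of `u^{-σ}` over `[n - 1/2, n + 1/2]` (midpoint form of Hermite–Hadamard), so the tail
is at most `∫_{3/2}^∞ u^{-σ} du = (3/2)^{1-σ}/(σ-1)`. Finally `(3/2)^{1-σ} = (2/3)^{σ-1}` lies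
below the chord `1 - 0.4 (σ - 1)` of the convex function `s ↦ (2/3)^s` on `[0, 0.06]`.
-/

open Real MeasureTheory Set Filter Topology

theorem convexOn_rpow_of_nonpos {p : ℝ} (hp : p ≤ 0) : ConvexOn ℝ (Ioi 0) fun x : ℝ ↦ x ^ p := by
  refine convexOn_of_hasDerivWithinAt2_nonneg (convex_Ioi 0)
    (f' := fun x ↦ p * x ^ (p - 1)) (f'' := fun x ↦ p * ((p - 1) * x ^ (p - 1 - 1)))
    (fun x hx ↦ continuousAt_rpow_const x p (.inl hx.ne') |>.continuousWithinAt) ?_ ?_ ?_ <;>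
    simp only [interior_Ioi, mem_Ioi]
  · exact fun x hx ↦ (hasDerivAt_rpow_const (.inl hx.ne')).hasDerivWithinAt
  · exact fun x hx ↦ ((hasDerivAt_rpow_const (.inl hx.ne')).const_mul p).hasDerivWithinAt
  · intro x hx
    rw [← mul_assoc]
    exact mul_nonneg (mul_nonneg_of_nonpos_of_nonpos hp (by linarith)) (rpow_pos_of_pos hx _).le

theorem ConvexOn.two_mul_mul_le_intervalIntegral {f : ℝ → ℝ} {a h : ℝ} (hh : 0 ≤ h)
    (hf : ConvexOn ℝ (Icc (a - h) (a + h)) f) (hfi : IntervalIntegrable f volume (a - h) (a + h)) :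
    2 * h * f a ≤ ∫ u in (a - h)..(a + h), f u := by
  have hreflect : ∫ u in (a - h)..(a + h), f (2 * a - u) = ∫ u in (a - h)..(a + h), f u := by
    rw [intervalIntegral.integral_comp_sub_left]; ring_nf
  have hfi' : IntervalIntegrable (fun u ↦ f (2 * a - u)) volume (a - h) (a + h) := by
    have := (hfi.comp_sub_left (2 * a)).symm
    rwa [show 2 * a - (a - h) = a + h by ring, show 2 * a - (a + h) = a - h by ring] at this
  have hmid : ∀ u ∈ Icc (a - h) (a + h), 2 * f a ≤ f u + f (2 * a - u) := by
    intro u hu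
    have hu' : 2 * a - u ∈ Icc (a - h) (a + h) := ⟨by linarith [hu.2], by linarith [hu.1]⟩
    have := hf.2 hu hu' (by norm_num : (0 : ℝ) ≤ 1 / 2) (by norm_num : (0 : ℝ) ≤ 1 / 2)
      (by norm_num)
    simp only [smul_eq_mul] at this
    rw [show 1 / 2 * u + 1 / 2 * (2 * a - u) = a by ring] at this
    linarith
  have := intervalIntegral.integral_mono_on (by linarith) intervalIntegrable_const
    (hfi.add hfi') hmid
  rw [intervalIntegral.integral_const, intervalIntegral.integral_add hfi hfi', hreflect] at this
  simp only [smul_eq_mul] at this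
  linarith

theorem tsum_le_integral_Ioi_of_le_intervalIntegral {f : ℝ → ℝ} {g : ℕ → ℝ} {a : ℝ}
    (hf : IntegrableOn f (Ioi a)) (hg : Summable g)
    (hle : ∀ n : ℕ, g n ≤ ∫ x in (a + n)..(a + n + 1), f x) :
    ∑' n, g n ≤ ∫ x in Ioi a, f x := by
  have hfi : ∀ k : ℕ, IntervalIntegrable f volume (a + k) (a + (k + 1 : ℕ)) := by
    intro k
    rw [intervalIntegrable_iff_integrableOn_Ioc_of_le (by push_cast; linarith)]
    exact hf.mono_set (Ioc_subset_Ioi_self.trans (Ioi_subset_Ioi (by simp)))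
  refine le_of_tendsto_of_tendsto' hg.hasSum.tendsto_sum_nat
    (intervalIntegral_tendsto_integral_Ioi a hf
      (tendsto_atTop_add_const_left _ a tendsto_natCast_atTop_atTop)) fun N ↦ ?_
  calc ∑ n ∈ Finset.range N, g n
      ≤ ∑ n ∈ Finset.range N, ∫ x in (a + n)..(a + (n + 1 : ℕ)), f x :=
        Finset.sum_le_sum fun n _ ↦ by simpa [add_assoc] using hle n
    _ = ∫ x in a..(a + N), f x := by
        simpa using intervalIntegral.sum_integral_adjacent_intervals (a := fun k : ℕ ↦ a + k)
          fun k _ ↦ hfi k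

theorem riemannZeta_ofReal_re_eq_tsum {σ : ℝ} (hσ : 1 < σ) :
    (riemannZeta σ).re = ∑' n : ℕ, ((n : ℝ) + 1) ^ (-σ) := by
  have hterm (n : ℕ) : 1 / (n + 1 : ℂ) ^ (σ : ℂ) = (((n : ℝ) + 1) ^ (-σ) : ℝ) := by
    rw [← Complex.ofReal_natCast, ← Complex.ofReal_one, ← Complex.ofReal_add,
      ← Complex.ofReal_cpow (by positivity), ← Complex.ofReal_div, rpow_neg (by positivity),
      one_div]
  rw [zeta_eq_tsum_one_div_nat_add_one_cpow (by simpa using hσ), tsum_congr hterm,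
    ← Complex.ofReal_tsum, Complex.ofReal_re]

theorem tsum_nat_add_two_rpow_neg_le {σ : ℝ} (hσ : 1 < σ) :
    ∑' n : ℕ, ((n : ℝ) + 2) ^ (-σ) ≤ (3 / 2 : ℝ) ^ (1 - σ) / (σ - 1) := by
  have hconvex := convexOn_rpow_of_nonpos (p := -σ) (by linarith)
  have hint : ∫ u in Ioi (3 / 2 : ℝ), u ^ (-σ) = (3 / 2 : ℝ) ^ (1 - σ) / (σ - 1) := by
    rw [integral_Ioi_rpow_of_lt (by linarith) (by norm_num), ← neg_div_neg_eq]
    ring_nf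
  rw [← hint]
  refine tsum_le_integral_Ioi_of_le_intervalIntegral
    (integrableOn_Ioi_rpow_of_lt (by linarith) (by norm_num)) ?_ fun n ↦ ?_
  · exact (summable_nat_add_iff 2).mpr (summable_nat_rpow (p := -σ) |>.mpr (by linarith))
      |>.congr fun n ↦ by push_cast; rfl
  · have hpos : Icc ((n : ℝ) + 2 - 1 / 2) (n + 2 + 1 / 2) ⊆ Ioi 0 :=
      fun x hx ↦ mem_Ioi.mpr (by linarith [hx.1, n.cast_nonneg (α := ℝ)])
    have hcont : ContinuousOn (fun x : ℝ ↦ x ^ (-σ)) (Ioi 0) :=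
      continuousOn_id.rpow_const fun x hx ↦ .inl (ne_of_gt hx)
    have := (hconvex.subset hpos (convex_Icc _ _)).two_mul_mul_le_intervalIntegral
      (by norm_num) ((hcont.mono hpos).intervalIntegrable_of_Icc (by linarith))
    convert this using 1 <;> ring_nf

theorem two_div_three_rpow_le {s : ℝ} (hs₀ : 0 ≤ s) (hs : s ≤ 0.06) :
    (2 / 3 : ℝ) ^ s ≤ 1 - 0.4 * s := by
  -- `(2/3)^0.06 ≈ 0.97597`, checked via 50th powers: `(2/3)^3 ≤ 0.976^50`
  have hend : (2 / 3 : ℝ) ^ (0.06 : ℝ) ≤ 0.976 := by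
    refine le_of_pow_le_pow_left₀ (n := 50) (by norm_num) (by norm_num) ?_
    rw [← rpow_natCast, ← rpow_mul (by norm_num)]
    norm_num
  set t := s / 0.06
  have := (convexOn_rpow_left (b := 2 / 3) (by norm_num)).2 (mem_univ 0) (mem_univ 0.06)
    (sub_nonneg.mpr (div_le_one_of_le₀ hs (by norm_num)) : 0 ≤ 1 - t) (by positivity : 0 ≤ t)
    (by ring)
  simp only [smul_eq_mul, rpow_zero, mul_zero, zero_add, mul_one] at this
  calc (2 / 3 : ℝ) ^ s = (2 / 3 : ℝ) ^ (t * 0.06) := by rw [div_mul_cancel₀ _ (by norm_num)]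
    _ ≤ 1 - t + t * 0.976 := this.trans (by gcongr)
    _ = 1 - 0.4 * s := by ring

theorem zeta_upper_bound (σ : ℝ) (h1 : 1 < σ) (h2 : σ ≤ 1.06) :
    (riemannZeta σ).re ≤ 0.6 + 1 / (σ - 1) := by
  have hsum : Summable fun n : ℕ ↦ ((n : ℝ) + 1) ^ (-σ) :=
    (summable_nat_add_iff 1).mpr (summable_nat_rpow (p := -σ) |>.mpr (by linarith)) |>.congr
      fun n ↦ by push_cast; rfl
  have hnum : (3 / 2 : ℝ) ^ (1 - σ) ≤ 1 - 0.4 * (σ - 1) := by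
    rw [← inv_div, inv_rpow (by norm_num), ← rpow_neg (by norm_num), neg_sub]
    exact two_div_three_rpow_le (by linarith) (by linarith)
  have hs : 0 < σ - 1 := by linarith
  rw [riemannZeta_ofReal_re_eq_tsum h1, hsum.tsum_eq_zero_add]
  simp only [CharP.cast_eq_zero, zero_add, one_rpow, Nat.cast_add, Nat.cast_one, add_assoc,
    one_add_one_eq_two]
  calc 1 + ∑' n : ℕ, ((n : ℝ) + 2) ^ (-σ) ≤ 1 + (3 / 2 : ℝ) ^ (1 - σ) / (σ - 1) := by
        gcongr; exact tsum_nat_add_two_rpow_neg_le h1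
    _ ≤ 1 + (1 - 0.4 * (σ - 1)) / (σ - 1) := by gcongr
    _ = 0.6 + 1 / (σ - 1) := by field_simp; ring
end

section
/- For real σ with 1 < σ ≤ 1.06 and any real t, one has |ζ'(σ+it)/ζ(σ+it)| < 1/(σ-1). -/
/-!
By the triangle inequality, `|ζ'/ζ(σ + it)| ≤ -ζ'/ζ(σ) = ∑ Λ(n) n^{-σ}`, so it suffices to show
`-ζ'(σ) < ζ(σ)/(σ - 1)`, using `-ζ'(σ) = (-ζ'/ζ(σ)) ζ(σ)` (the Dirichlet series identity
`Λ * 1 = log`). Comparing the Dirichlet series with the integrals of `x^{-σ}` over `[2, ∞)` and of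
`x^{-σ} log x` over `[3, ∞)` gives `ζ(σ) ≥ 1 + 2^{1-σ}/(σ-1)` and
`-ζ'(σ) ≤ log 2/2^σ + log 3/3^σ + 3^{1-σ} (log 3/(σ-1) + 1/(σ-1)^2)`, and these explicit bounds
are compatible when `σ ≤ 1.06`.
-/

open Real Filter Topology Set
open scoped ArithmeticFunction.vonMangoldt
open ArithmeticFunction (convolution_vonMangoldt_const_one LSeriesSummable_vonMangoldt
  vonMangoldt_nonneg LSeries_vonMangoldt_eq_deriv_riemannZeta_div)

section ofReal

variable {σ : ℝ}

-- `σ ≠ 0` makes the junk value `0 ^ (-σ) = 0` agree with `LSeries.term f s 0 = 0`.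
lemma LSeries.term_ofReal (f : ℕ → ℝ) (hσ : σ ≠ 0) (n : ℕ) :
    term (fun n ↦ (f n : ℂ)) σ n = ↑(f n * (n : ℝ) ^ (-σ)) := by
  rcases eq_or_ne n 0 with rfl | hn
  · simp [Real.zero_rpow (neg_ne_zero.mpr hσ)]
  · rw [term_of_ne_zero hn, rpow_neg n.cast_nonneg, ← div_eq_mul_inv, Complex.ofReal_div,
      Complex.ofReal_cpow n.cast_nonneg, Complex.ofReal_natCast]

lemma summable_of_LSeriesSummable_ofReal {f : ℕ → ℝ} (hσ : σ ≠ 0)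
    (h : LSeriesSummable (fun n ↦ (f n : ℂ)) σ) : Summable fun n ↦ f n * (n : ℝ) ^ (-σ) := by
  rw [LSeriesSummable, funext (LSeries.term_ofReal f hσ)] at h
  exact Complex.summable_ofReal.mp h

lemma LSeries_ofReal {f : ℕ → ℝ} (hσ : σ ≠ 0) :
    LSeries (fun n ↦ (f n : ℂ)) σ = ↑(∑' n, f n * (n : ℝ) ^ (-σ)) := by
  rw [LSeries, Complex.ofReal_tsum]
  exact tsum_congr (LSeries.term_ofReal f hσ)

lemma norm_LSeries_ofReal_le {f : ℕ → ℝ} (hf : 0 ≤ f) {s : ℂ} (hs : s.re ≠ 0)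
    (h : LSeriesSummable (fun n ↦ (f n : ℂ)) s) :
    ‖LSeries (fun n ↦ (f n : ℂ)) s‖ ≤ ∑' n, f n * (n : ℝ) ^ (-s.re) := by
  have hnorm (n : ℕ) : ‖LSeries.term (fun n ↦ (f n : ℂ)) s n‖ = f n * (n : ℝ) ^ (-s.re) := by
    have hre : ‖LSeries.term (fun n ↦ (f n : ℂ)) s n‖
        = ‖LSeries.term (fun n ↦ (f n : ℂ)) s.re n‖ := by
      simp only [LSeries.norm_term_eq, Complex.ofReal_re]
    rw [hre, LSeries.term_ofReal f hs, Complex.norm_real,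
      norm_of_nonneg (mul_nonneg (hf n) (rpow_nonneg n.cast_nonneg _))]
  calc ‖LSeries (fun n ↦ (f n : ℂ)) s‖ ≤ ∑' n, ‖LSeries.term (fun n ↦ (f n : ℂ)) s n‖ :=
        norm_tsum_le_tsum_norm h.norm
    _ = ∑' n, f n * (n : ℝ) ^ (-s.re) := tsum_congr hnorm

end ofReal

section vonMangoldt

variable {σ : ℝ}

lemma ofReal_log_natCast_eq : (fun n : ℕ ↦ ((log n : ℝ) : ℂ)) = fun n : ℕ ↦ Complex.log n :=
  funext fun _ ↦ Complex.natCast_log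

lemma summable_log_mul_rpow_neg (hσ : 1 < σ) : Summable fun n : ℕ ↦ log n * (n : ℝ) ^ (-σ) := by
  have hs : 1 < (σ : ℂ).re := by simpa using hσ
  have h := (LSeriesSummable_vonMangoldt hs).convolution (LSeriesSummable_one_iff.mpr hs)
  rw [convolution_vonMangoldt_const_one, ← ofReal_log_natCast_eq] at h
  exact summable_of_LSeriesSummable_ofReal (by linarith) h

lemma tsum_vonMangoldt_mul_tsum_rpow_neg (hσ : 1 < σ) :
    (∑' n, Λ n * (n : ℝ) ^ (-σ)) * ∑' n : ℕ, (n : ℝ) ^ (-σ)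
      = ∑' n : ℕ, log n * (n : ℝ) ^ (-σ) := by
  have hs : 1 < (σ : ℂ).re := by simpa using hσ
  have hσ0 : σ ≠ 0 := by linarith
  have hconv :=
    LSeries_convolution' (LSeriesSummable_vonMangoldt hs) (LSeriesSummable_one_iff.mpr hs)
  rw [convolution_vonMangoldt_const_one, ← ofReal_log_natCast_eq] at hconv
  have hone : LSeries 1 σ = ↑(∑' n : ℕ, (n : ℝ) ^ (-σ)) := by
    simpa [Pi.one_def] using LSeries_ofReal (f := fun _ ↦ 1) hσ0
  apply Complex.ofReal_injective
  rw [Complex.ofReal_mul, ← LSeries_ofReal hσ0, ← hone, ← LSeries_ofReal hσ0, hconv]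

end vonMangoldt

lemma le_tsum_of_sub_le {f u : ℕ → ℝ} (hf : Summable f) (hu : Tendsto u atTop (𝓝 0))
    (h : ∀ k, u k - u (k + 1) ≤ f k) : u 0 ≤ ∑' k, f k := by
  refine le_of_tendsto_of_tendsto' (by simpa using tendsto_const_nhds.sub hu)
    hf.hasSum.tendsto_sum_nat fun n ↦ ?_
  rw [← Finset.sum_range_sub']
  exact Finset.sum_le_sum fun k _ ↦ h k

lemma tsum_le_of_le_sub {f u : ℕ → ℝ} (hf : Summable f) (hu : Tendsto u atTop (𝓝 0))
    (h : ∀ k, f k ≤ u k - u (k + 1)) : ∑' k, f k ≤ u 0 := by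
  refine le_of_tendsto_of_tendsto' hf.hasSum.tendsto_sum_nat
    (by simpa using tendsto_const_nhds.sub hu) fun n ↦ ?_
  rw [← Finset.sum_range_sub']
  exact Finset.sum_le_sum fun k _ ↦ h k

lemma sub_mem_Icc_of_hasDerivAt_neg {F f : ℝ → ℝ} {x : ℝ}
    (hF : ∀ y ∈ Icc x (x + 1), HasDerivAt F (-f y) y) (hf : AntitoneOn f (Icc x (x + 1))) :
    F x - F (x + 1) ∈ Icc (f (x + 1)) (f x) := by
  obtain ⟨c, hc, hslope⟩ := exists_hasDerivAt_eq_slope F (fun y ↦ -f y) (lt_add_one x)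
    (fun y hy ↦ (hF y hy).continuousAt.continuousWithinAt)
    (fun y hy ↦ hF y (Ioo_subset_Icc_self hy))
  have hFc : F x - F (x + 1) = f c := by
    rw [add_sub_cancel_left, div_one] at hslope
    linarith
  rw [hFc]
  exact ⟨hf (Ioo_subset_Icc_self hc) (right_mem_Icc.mpr (by linarith)) hc.2.le,
    hf (left_mem_Icc.mpr (by linarith)) (Ioo_subset_Icc_self hc) hc.1.le⟩

section RealBounds

variable {σ y : ℝ}

lemma hasDerivAt_rpow_one_sub_div (hσ : σ ≠ 1) (hy : 0 < y) :
    HasDerivAt (fun x ↦ x ^ (1 - σ) / (σ - 1)) (-y ^ (-σ)) y := by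
  refine ((hasDerivAt_rpow_const (Or.inl hy.ne')).div_const (σ - 1)).congr_deriv ?_
  rw [sub_sub_cancel_left, mul_div_right_comm, ← neg_sub σ 1, neg_div_self (sub_ne_zero.mpr hσ)]
  ring

lemma hasDerivAt_rpow_one_sub_mul_log (hσ : σ ≠ 1) (hy : 0 < y) :
    HasDerivAt (fun x ↦ x ^ (1 - σ) * (log x / (σ - 1) + 1 / (σ - 1) ^ 2))
      (-(log y * y ^ (-σ))) y := by
  refine ((hasDerivAt_rpow_const (p := 1 - σ) (Or.inl hy.ne')).mul
    (((hasDerivAt_log hy.ne').div_const (σ - 1)).add_const (1 / (σ - 1) ^ 2))).congr_deriv ?_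
  rw [sub_sub_cancel_left, show (1 : ℝ) - σ = -σ + 1 by ring, rpow_add_one hy.ne']
  field_simp
  ring

lemma hasDerivAt_log_mul_rpow_neg (hy : 0 < y) :
    HasDerivAt (fun x ↦ log x * x ^ (-σ)) (y ^ (-σ - 1) * (1 - σ * log y)) y := by
  refine ((hasDerivAt_log hy.ne').mul
    (hasDerivAt_rpow_const (p := -σ) (Or.inl hy.ne'))).congr_deriv ?_
  rw [rpow_sub_one hy.ne']
  field_simp
  ring

lemma antitoneOn_log_mul_rpow_neg (hσ : 1 ≤ σ) :
    AntitoneOn (fun y ↦ log y * y ^ (-σ)) (Ici (exp 1)) := by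
  have hpos {y : ℝ} (hy : y ∈ Ici (exp 1)) : 0 < y := (exp_pos 1).trans_le hy
  refine antitoneOn_of_hasDerivWithinAt_nonpos (convex_Ici _)
    (fun y hy ↦ (hasDerivAt_log_mul_rpow_neg (hpos hy)).continuousAt.continuousWithinAt)
    (fun y hy ↦ (hasDerivAt_log_mul_rpow_neg (hpos (interior_subset hy))).hasDerivWithinAt)
    (fun y hy ↦ ?_)
  have hy := interior_subset hy
  have hlog : 1 ≤ log y := (le_log_iff_exp_le (hpos hy)).mpr hy
  exact mul_nonpos_of_nonneg_of_nonpos (rpow_nonneg (hpos hy).le _) (by nlinarith)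

lemma tendsto_rpow_one_sub_div_atTop (hσ : 1 < σ) :
    Tendsto (fun x ↦ x ^ (1 - σ) / (σ - 1)) atTop (𝓝 0) := by
  simpa [neg_sub] using (tendsto_rpow_neg_atTop (sub_pos.mpr hσ)).div_const (σ - 1)

lemma tendsto_rpow_one_sub_mul_log_atTop (hσ : 1 < σ) :
    Tendsto (fun x ↦ x ^ (1 - σ) * (log x / (σ - 1) + 1 / (σ - 1) ^ 2)) atTop (𝓝 0) := by
  have hε : 0 < σ - 1 := sub_pos.mpr hσ
  have hlog := ((isLittleO_log_rpow_atTop hε).tendsto_div_nhds_zero.div_const (σ - 1)).add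
    ((tendsto_rpow_neg_atTop hε).div_const ((σ - 1) ^ 2))
  rw [zero_div, zero_div, add_zero] at hlog
  refine hlog.congr' ((eventually_gt_atTop 0).mono fun x hx ↦ ?_)
  beta_reduce
  rw [show 1 - σ = -(σ - 1) by ring, rpow_neg hx.le]
  ring

lemma one_add_two_rpow_div_le_tsum (hσ : 1 < σ) :
    1 + 2 ^ (1 - σ) / (σ - 1) ≤ ∑' n : ℕ, (n : ℝ) ^ (-σ) := by
  set F : ℝ → ℝ := fun x ↦ x ^ (1 - σ) / (σ - 1)
  have hs : Summable fun n : ℕ ↦ (n : ℝ) ^ (-σ) := summable_nat_rpow.mpr (by linarith)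
  have hhead : ∑ n ∈ Finset.range 2, (n : ℝ) ^ (-σ) = 1 := by
    simp [Finset.sum_range_succ, zero_rpow (by linarith : -σ ≠ 0)]
  have hstep (k : ℕ) : F (k + 2) - F ((k + 1 : ℕ) + 2) ≤ ((k + 2 : ℕ) : ℝ) ^ (-σ) := by
    have hk : (0 : ℝ) < k + 2 := by positivity
    rw [show ((k + 2 : ℕ) : ℝ) = k + 2 by push_cast; ring,
      show ((k + 1 : ℕ) : ℝ) + 2 = k + 2 + 1 by push_cast; ring]
    exact (sub_mem_Icc_of_hasDerivAt_neg (f := fun y ↦ y ^ (-σ))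
      (fun y hy ↦ hasDerivAt_rpow_one_sub_div hσ.ne' (hk.trans_le hy.1))
      (fun a ha b _ hab ↦ rpow_le_rpow_of_nonpos (hk.trans_le ha.1) hab (by linarith))).2
  have htail := le_tsum_of_sub_le ((summable_nat_add_iff 2).mpr hs)
    ((tendsto_rpow_one_sub_div_atTop hσ).comp
      (tendsto_atTop_add_const_right _ 2 tendsto_natCast_atTop_atTop)) hstep
  rw [← hs.sum_add_tsum_nat_add 2, hhead]
  norm_num [F] at htail ⊢
  linarith

lemma tsum_log_mul_rpow_neg_le (hσ : 1 < σ) :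
    ∑' n : ℕ, log n * (n : ℝ) ^ (-σ) ≤ log 2 * 2 ^ (-σ) + log 3 * 3 ^ (-σ)
      + 3 ^ (1 - σ) * (log 3 / (σ - 1) + 1 / (σ - 1) ^ 2) := by
  set F : ℝ → ℝ := fun x ↦ x ^ (1 - σ) * (log x / (σ - 1) + 1 / (σ - 1) ^ 2)
  have hs := summable_log_mul_rpow_neg hσ
  have hhead : ∑ n ∈ Finset.range 4, log n * (n : ℝ) ^ (-σ)
      = log 2 * 2 ^ (-σ) + log 3 * 3 ^ (-σ) := by
    norm_num [Finset.sum_range_succ]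
  have hstep (k : ℕ) :
      log ((k + 4 : ℕ) : ℝ) * ((k + 4 : ℕ) : ℝ) ^ (-σ) ≤ F (k + 3) - F ((k + 1 : ℕ) + 3) := by
    have hk : exp 1 ≤ k + 3 := by
      linarith [exp_one_lt_d9, (Nat.cast_nonneg k : (0 : ℝ) ≤ k)]
    rw [show ((k + 4 : ℕ) : ℝ) = k + 3 + 1 by push_cast; ring,
      show ((k + 1 : ℕ) : ℝ) + 3 = k + 3 + 1 by push_cast; ring]
    exact (sub_mem_Icc_of_hasDerivAt_neg (f := fun y ↦ log y * y ^ (-σ))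
      (fun y hy ↦ hasDerivAt_rpow_one_sub_mul_log hσ.ne' ((exp_pos 1).trans_le (hk.trans hy.1)))
      ((antitoneOn_log_mul_rpow_neg hσ.le).mono fun y hy ↦ hk.trans hy.1)).1
  have htail := tsum_le_of_le_sub ((summable_nat_add_iff 4).mpr hs)
    ((tendsto_rpow_one_sub_mul_log_atTop hσ).comp
      (tendsto_atTop_add_const_right _ 3 tendsto_natCast_atTop_atTop)) hstep
  rw [← hs.sum_add_tsum_nat_add 4, hhead]
  norm_num [F] at htail ⊢
  linarith

lemma three_rpow_mul_le_two_rpow (σ : ℝ) :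
    3 ^ (1 - σ) * (1 + (σ - 1) * (log 3 - log 2)) ≤ (2 : ℝ) ^ (1 - σ) := by
  have hexp : (2 : ℝ) ^ (1 - σ) = 3 ^ (1 - σ) * exp ((σ - 1) * (log 3 - log 2)) := by
    rw [rpow_def_of_pos two_pos, rpow_def_of_pos three_pos, ← exp_add]
    ring_nf
  rw [hexp]
  gcongr
  linarith [add_one_le_exp ((σ - 1) * (log 3 - log 2))]

lemma negDeriv_zeta_bound_lt_zeta_bound_div (h1 : 1 < σ) (h2 : σ ≤ 1.06) :
    log 2 * 2 ^ (-σ) + log 3 * 3 ^ (-σ) + 3 ^ (1 - σ) * (log 3 / (σ - 1) + 1 / (σ - 1) ^ 2)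
      < (1 + 2 ^ (1 - σ) / (σ - 1)) / (σ - 1) := by
  have hkey := three_rpow_mul_le_two_rpow σ
  set ε := σ - 1
  have hεpos : 0 < ε := by linarith
  have hq : (3 : ℝ) ^ (1 - σ) ≤ 1 := rpow_le_one_of_one_le_of_nonpos (by norm_num) (by linarith)
  have h2σ : (2 : ℝ) ^ (-σ) ≤ 1 / 2 := by
    have := rpow_le_rpow_of_exponent_le (by norm_num : (1 : ℝ) ≤ 2) (by linarith : -σ ≤ -1)
    rwa [rpow_neg_one, ← one_div] at this
  have h3σ : (3 : ℝ) ^ (-σ) ≤ 1 / 3 := by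
    have := rpow_le_rpow_of_exponent_le (by norm_num : (1 : ℝ) ≤ 3) (by linarith : -σ ≤ -1)
    rwa [rpow_neg_one, ← one_div] at this
  have hlog2 : 0 < log 2 := log_pos one_lt_two
  have hlog3 : log 3 ≤ 2 * log 2 := by
    rw [← log_rpow two_pos]
    exact log_le_log three_pos (by norm_num)
  have hhead : log 2 * 2 ^ (-σ) + log 3 * 3 ^ (-σ) ≤ log 2 / 2 + log 3 / 3 := by
    have hlog3_nonneg : 0 ≤ log 3 := log_nonneg (by norm_num)
    nlinarith
  have hnum : ε ^ 2 * (log 2 * 2 ^ (-σ) + log 3 * 3 ^ (-σ)) + 3 ^ (1 - σ) * (ε * log 3 + 1)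
      < ε + 2 ^ (1 - σ) := by
    have hlog2_term : ε * (3 ^ (1 - σ) * log 2) ≤ ε * log 2 := by
      gcongr
      exact mul_le_of_le_one_left hlog2.le hq
    have hhead_term : ε ^ 2 * (log 2 * 2 ^ (-σ) + log 3 * 3 ^ (-σ))
        ≤ ε * (0.06 * (log 2 / 2 + log 3 / 3)) := by
      rw [sq, mul_assoc]
      gcongr
      linarith
    -- `hkey` turns `3^{1-σ} (1 + ε log 3)` into at most `2^{1-σ} + ε 3^{1-σ} log 2`, so what is
    -- left is `0.06 (log 2/2 + log 3/3) + log 2 < 1`.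
    nlinarith [log_two_lt_d9]
  calc _ = (ε ^ 2 * (log 2 * 2 ^ (-σ) + log 3 * 3 ^ (-σ)) + 3 ^ (1 - σ) * (ε * log 3 + 1))
        / ε ^ 2 := by field_simp
    _ < (ε + 2 ^ (1 - σ)) / ε ^ 2 := by gcongr
    _ = _ := by field_simp

end RealBounds

lemma tsum_vonMangoldt_mul_rpow_neg_lt {σ : ℝ} (h1 : 1 < σ) (h2 : σ ≤ 1.06) :
    ∑' n, Λ n * (n : ℝ) ^ (-σ) < 1 / (σ - 1) := by
  have hZ := one_add_two_rpow_div_le_tsum h1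
  have hZpos : 0 < ∑' n : ℕ, (n : ℝ) ^ (-σ) := by
    have : 0 < (2 : ℝ) ^ (1 - σ) / (σ - 1) := div_pos (by positivity) (by linarith)
    linarith
  rw [← mul_lt_mul_iff_of_pos_right hZpos, tsum_vonMangoldt_mul_tsum_rpow_neg h1]
  calc _ ≤ _ := tsum_log_mul_rpow_neg_le h1
    _ < (1 + 2 ^ (1 - σ) / (σ - 1)) / (σ - 1) := negDeriv_zeta_bound_lt_zeta_bound_div h1 h2
    _ ≤ 1 / (σ - 1) * ∑' n : ℕ, (n : ℝ) ^ (-σ) := by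
      rw [one_div_mul_eq_div]
      gcongr

theorem log_deriv_zeta_bound (σ t : ℝ) (h1 : 1 < σ) (h2 : σ ≤ 1.06) :
    ‖deriv riemannZeta (σ + t * Complex.I) / riemannZeta (σ + t * Complex.I)‖
      < 1 / (σ - 1) := by
  have hre : (σ + t * Complex.I).re = σ := by simp
  have hs : 1 < (σ + t * Complex.I).re := hre.symm ▸ h1
  rw [← norm_neg, ← neg_div, ← LSeries_vonMangoldt_eq_deriv_riemannZeta_div hs]
  calc _ ≤ ∑' n, Λ n * (n : ℝ) ^ (-(σ + t * Complex.I).re) :=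
        norm_LSeries_ofReal_le (fun _ ↦ vonMangoldt_nonneg) (zero_lt_one.trans hs).ne'
          (LSeriesSummable_vonMangoldt hs)
    _ < 1 / (σ - 1) := by rw [hre]; exact tsum_vonMangoldt_mul_rpow_neg_lt h1 h2
end

section
/- For real σ > 1, the inequality -ζ'(σ) < ζ(σ)/(σ-1) holds. -/
lemma key_tail_ineq (σ : ℝ) (h1 : 1 < σ) (x : ℝ) (hx : 1 ≤ x) :
    1 / (x + 1) ^ σ ≤ (x ^ (1 - σ) - (x + 1) ^ (1 - σ)) / (σ - 1) := by
  have hσ : 0 < σ - 1 := by linarith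
  obtain ⟨c, hc, hc'⟩ := exists_hasDerivAt_eq_slope (fun t : ℝ => t ^ (1 - σ))
    (fun t : ℝ => (1 - σ) * t ^ (1 - σ - 1)) (lt_add_one x)
    (fun t ht => ((Real.hasDerivAt_rpow_const (p := 1 - σ)
      (Or.inl (ne_of_gt (by have := ht.1; linarith)))).continuousAt).continuousWithinAt)
    (fun t ht => Real.hasDerivAt_rpow_const (Or.inl (ne_of_gt (by have := ht.1; linarith))))
  have hcx : 0 < c := lt_trans (by linarith) hc.1
  have heq : x ^ (1 - σ) - (x + 1) ^ (1 - σ) = (σ - 1) * c ^ (-σ) := by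
    have h2 : (1 - σ) * c ^ (1 - σ - 1) = ((x + 1) ^ (1 - σ) - x ^ (1 - σ)) / (x + 1 - x) := hc'
    rw [show x + 1 - x = 1 by ring, div_one] at h2
    rw [show (-σ : ℝ) = 1 - σ - 1 by ring]
    linarith [h2]
  rw [heq, mul_div_cancel_left₀ _ (ne_of_gt hσ)]
  calc 1 / (x + 1) ^ σ = (x + 1) ^ (-σ) := by
        rw [Real.rpow_neg (by linarith), one_div]
    _ ≤ c ^ (-σ) := Real.rpow_le_rpow_of_nonpos hcx hc.2.le (by linarith)

lemma real_core (σ : ℝ) (h1 : 1 < σ) :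
    ∑' n : ℕ, Real.log n * (1 / (n : ℝ) ^ σ) < (∑' n : ℕ, 1 / (n : ℝ) ^ σ) / (σ - 1) := by
  have hσ : 0 < σ - 1 := by linarith
  set a : ℕ → ℝ := fun n => 1 / (n : ℝ) ^ σ with ha_def
  have ha : Summable a := Real.summable_one_div_nat_rpow.mpr h1
  have hann : ∀ n, 0 ≤ a n := fun n => by positivity
  set b : ℕ → ℝ := fun m => Real.log ((m : ℝ) + 2) - Real.log ((m : ℝ) + 1) with hb_def
  have hbnn : ∀ m, 0 ≤ b m := fun m =>
    sub_nonneg.mpr (Real.log_le_log (by positivity) (by linarith))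
  have hblt : ∀ m : ℕ, b m < 1 / ((m : ℝ) + 1) := by
    intro m
    have hm1 : (0:ℝ) < (m : ℝ) + 1 := by positivity
    have h := Real.log_lt_sub_one_of_pos (x := ((m:ℝ)+2)/((m:ℝ)+1)) (by positivity)
      (ne_of_gt ((one_lt_div hm1).mpr (by linarith)))
    rw [Real.log_div (by linarith) (by linarith)] at h
    have he : ((m:ℝ)+2)/((m:ℝ)+1) - 1 = 1/((m:ℝ)+1) := by
      rw [div_sub_one (ne_of_gt hm1)]; congr 1; ring
    rw [he] at h
    exact h
  set T : ℕ → ℝ := fun m => ∑' j : ℕ, a (j + (m + 2)) with hT_def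
  have hTsum : ∀ m, Summable (fun j => a (j + (m + 2))) := fun m => (summable_nat_add_iff _).mpr ha
  have hTnn : ∀ m, 0 ≤ T m := fun m => tsum_nonneg (fun j => hann _)
  have hTbound : ∀ m : ℕ, T m ≤ ((m : ℝ) + 1) ^ (1 - σ) / (σ - 1) := by
    intro m
    apply Real.tsum_le_of_sum_range_le (fun j => hann _)
    intro N
    set g : ℕ → ℝ := fun j => ((j : ℝ) + (m : ℝ) + 1) ^ (1 - σ) with hg_def
    calc ∑ j ∈ Finset.range N, a (j + (m + 2))
        ≤ ∑ j ∈ Finset.range N, (g j - g (j + 1)) / (σ - 1) := by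
          apply Finset.sum_le_sum
          intro j _
          have hx : (1:ℝ) ≤ (j : ℝ) + (m : ℝ) + 1 := by
            have := Nat.cast_nonneg (α := ℝ) j
            have := Nat.cast_nonneg (α := ℝ) m
            linarith
          have := key_tail_ineq σ h1 ((j : ℝ) + (m : ℝ) + 1) hx
          have e1 : a (j + (m + 2)) = 1 / (((j : ℝ) + (m : ℝ) + 1) + 1) ^ σ := by
            simp only [ha_def]; push_cast; ring_nf
          have e2 : g (j + 1) = (((j : ℝ) + (m : ℝ) + 1) + 1) ^ (1 - σ) := by
            simp only [hg_def]; push_cast; ring_nf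
          rw [e1, e2]
          exact this
      _ = (g 0 - g N) / (σ - 1) := by
          rw [← Finset.sum_div, Finset.sum_range_sub' g N]
      _ ≤ g 0 / (σ - 1) := by
          have hgN : 0 ≤ g N := Real.rpow_nonneg (by positivity) _
          gcongr
          linarith
      _ = ((m : ℝ) + 1) ^ (1 - σ) / (σ - 1) := by
          simp only [hg_def]; norm_num
  have hT0pos : 0 < T 0 := by
    have h2 : a (0 + (0 + 2)) ≤ T 0 := Summable.le_tsum (hTsum 0) 0 (fun j _ => hann _)
    have : (0:ℝ) < a 2 := by
      simp only [ha_def]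
      positivity
    simpa using lt_of_lt_of_le this h2
  -- majorant
  have hd_sum : Summable (fun m : ℕ => a (m + 1) / (σ - 1)) :=
    ((summable_nat_add_iff 1).mpr ha).div_const _
  have hcd : ∀ m : ℕ, b m * T m ≤ a (m + 1) / (σ - 1) := by
    intro m
    have hm1 : (0:ℝ) < (m : ℝ) + 1 := by positivity
    calc b m * T m ≤ (1 / ((m:ℝ)+1)) * (((m : ℝ) + 1) ^ (1 - σ) / (σ - 1)) :=
          mul_le_mul (hblt m).le (hTbound m) (hTnn m) (by positivity)
      _ = a (m + 1) / (σ - 1) := by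
          simp only [ha_def]
          rw [show (1 - σ) = 1 + -σ by ring, Real.rpow_add hm1, Real.rpow_one,
            Real.rpow_neg hm1.le]
          have hps : (0:ℝ) < ((m:ℝ)+1) ^ σ := Real.rpow_pos_of_pos hm1 _
          push_cast
          field_simp
  have hc_sum : Summable (fun m : ℕ => b m * T m) :=
    Summable.of_nonneg_of_le (fun m => mul_nonneg (hbnn m) (hTnn m)) hcd hd_sum
  have hstrict : b 0 * T 0 < a (0 + 1) / (σ - 1) := by
    have h0 : b 0 * T 0 < 1 * T 0 := by
      apply mul_lt_mul_of_pos_right _ hT0pos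
      have := hblt 0
      norm_num at this ⊢
      linarith
    have h2 : T 0 ≤ a 1 / (σ - 1) := by
      have := hTbound 0
      simp only [ha_def] at *
      norm_num [Real.one_rpow] at this ⊢
      convert this using 2
    calc b 0 * T 0 < 1 * T 0 := h0
      _ = T 0 := one_mul _
      _ ≤ a (0 + 1) / (σ - 1) := by simpa using h2
  have hCD : ∑' m : ℕ, b m * T m < ∑' m : ℕ, a (m + 1) / (σ - 1) :=
    Summable.tsum_lt_tsum hcd hstrict hc_sum hd_sum
  have hD : ∑' m : ℕ, a (m + 1) / (σ - 1) = (∑' n : ℕ, a n) / (σ - 1) := by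
    rw [tsum_div_const]
    congr 1
    have h0 : a 0 = 0 := by
      simp only [ha_def]
      rw [Nat.cast_zero, Real.zero_rpow (by linarith), div_zero]
    rw [Summable.tsum_eq_zero_add ha, h0, zero_add]
  -- log as telescoping sum
  have hlog : ∀ n : ℕ, Real.log n = ∑ m ∈ Finset.range (n - 1), b m := by
    intro n
    cases n with
    | zero => simp [Real.log_zero]
    | succ k =>
      simp only [Nat.add_sub_cancel]
      induction k with
      | zero => simp
      | succ k ih =>
        rw [Finset.sum_range_succ, ← ih]
        simp only [hb_def]
        push_cast
        rw [show ((k:ℝ) + 1 + 1) = (k:ℝ) + 2 by ring]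
        ring
  -- partial sums of S bounded by C
  have hSC : ∑' n : ℕ, Real.log n * a n ≤ ∑' m : ℕ, b m * T m := by
    apply Real.tsum_le_of_sum_range_le
      (fun n => mul_nonneg (Real.log_natCast_nonneg n) (hann n))
    intro N
    have step1 : ∀ n ∈ Finset.range N, Real.log n * a n
        = ∑ m ∈ Finset.range N, (if m + 2 ≤ n then b m * a n else 0) := by
      intro n hn
      have hn' := Finset.mem_range.mp hn
      rw [hlog n, Finset.sum_mul, ← Finset.sum_filter]
      apply Finset.sum_congr _ (fun x _ => rfl)
      ext m
      simp only [Finset.mem_range, Finset.mem_filter]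
      omega
    rw [Finset.sum_congr rfl step1, Finset.sum_comm]
    have step2 : ∀ m ∈ Finset.range N,
        ∑ n ∈ Finset.range N, (if m + 2 ≤ n then b m * a n else 0) ≤ b m * T m := by
      intro m _
      rw [← Finset.sum_filter]
      have hfe : (Finset.range N).filter (fun n => m + 2 ≤ n) = Finset.Ico (m + 2) N := by
        ext n
        simp only [Finset.mem_filter, Finset.mem_range, Finset.mem_Ico]
        omega
      rw [hfe, ← Finset.mul_sum]
      apply mul_le_mul_of_nonneg_left _ (hbnn m)
      rw [Finset.sum_Ico_eq_sum_range]
      calc ∑ j ∈ Finset.range (N - (m + 2)), a (m + 2 + j)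
          = ∑ j ∈ Finset.range (N - (m + 2)), a (j + (m + 2)) := by
            apply Finset.sum_congr rfl
            intro j _
            rw [add_comm]
        _ ≤ T m := Summable.sum_le_tsum _ (fun j _ => hann _) (hTsum m)
    calc ∑ m ∈ Finset.range N, ∑ n ∈ Finset.range N, (if m + 2 ≤ n then b m * a n else 0)
        ≤ ∑ m ∈ Finset.range N, b m * T m := Finset.sum_le_sum step2
      _ ≤ ∑' m : ℕ, b m * T m := Summable.sum_le_tsum _ (fun m _ => mul_nonneg (hbnn m) (hTnn m)) hc_sum
  calc ∑' n : ℕ, Real.log n * a n ≤ ∑' m : ℕ, b m * T m := hSC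
    _ < ∑' m : ℕ, a (m + 1) / (σ - 1) := hCD
    _ = (∑' n : ℕ, a n) / (σ - 1) := hD

open LSeries

theorem neg_zeta_deriv_bound (σ : ℝ) (h1 : 1 < σ) :
    -(deriv riemannZeta σ).re < (riemannZeta σ).re / (σ - 1) := by
  have hs : 1 < (σ : ℂ).re := by simpa using h1
  have habs : abscissaOfAbsConv 1 < (σ : ℂ).re := by
    rw [LSeries.abscissaOfAbsConv_one]
    exact_mod_cast hs
  have hderiv : deriv riemannZeta (σ : ℂ) = - LSeries (logMul 1) (σ : ℂ) := by
    rw [← LSeries_deriv habs]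
    refine Filter.EventuallyEq.deriv_eq <| Filter.eventuallyEq_iff_exists_mem.mpr ?_
    exact ⟨{z | 1 < z.re}, (isOpen_lt continuous_const Complex.continuous_re).mem_nhds hs,
      fun z hz => (LSeries_one_eq_riemannZeta hz).symm⟩
  have hsum : LSeriesSummable (logMul 1) (σ : ℂ) := LSeriesSummable_logMul_of_lt_re habs
  have hterm : ∀ n : ℕ, (term (logMul 1) (σ : ℂ) n).re = Real.log n * (1 / (n : ℝ) ^ σ) := by
    intro n
    rcases eq_or_ne n 0 with rfl | hn
    · simp [LSeries.term]
    · rw [LSeries.term_of_ne_zero hn]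
      have hc : ((n : ℂ)) ^ (σ : ℂ) = (((n : ℝ) ^ σ : ℝ) : ℂ) := by
        rw [← Complex.ofReal_natCast n, ← Complex.ofReal_cpow (Nat.cast_nonneg n)]
      simp only [logMul, Pi.one_apply, mul_one, ← Complex.natCast_log, hc,
        ← Complex.ofReal_div, Complex.ofReal_re]
      rw [div_eq_mul_one_div]
  have hL : -(deriv riemannZeta (σ : ℂ)).re = ∑' n : ℕ, Real.log n * (1 / (n : ℝ) ^ σ) := by
    rw [hderiv, Complex.neg_re, neg_neg, LSeries, Complex.re_tsum hsum, tsum_congr hterm]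
  have hZ : (riemannZeta (σ : ℂ)).re = ∑' n : ℕ, 1 / (n : ℝ) ^ σ := by
    rw [zeta_eq_tsum_one_div_nat_cpow hs]
    have hterm2 : ∀ n : ℕ, (1 : ℂ) / (n : ℂ) ^ (σ : ℂ) = (((1 / (n : ℝ) ^ σ : ℝ)) : ℂ) := by
      intro n
      rcases eq_or_ne n 0 with rfl | hn
      · have hσ0 : (σ : ℂ) ≠ 0 := Complex.ofReal_ne_zero.mpr (by linarith)
        simp [Complex.zero_cpow hσ0, Real.zero_rpow (show σ ≠ 0 by linarith)]
      · rw [← Complex.ofReal_natCast n, ← Complex.ofReal_cpow (Nat.cast_nonneg n),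
          Complex.ofReal_div, Complex.ofReal_one]
    rw [tsum_congr hterm2, ← Complex.ofReal_tsum, Complex.ofReal_re]
  rw [hL, hZ]
  exact real_core σ h1
end

section
/- For every complex number z with Re z ≥ 0 and |z| ≤ π/2 which is not a pole of cot, one has Re(cot z - 1/z + 4z/π²) ≥ 0. -/
/-!
`f z = cot z - 1/z + 4z/π²` is holomorphic on `|z| < π`, so by the minimum principle for `Re f`
(the maximum modulus principle applied to `exp (-f)`) it suffices to check `Re f ≥ 0` on the
boundary of the half-disc `{Re z > 0, |z| < π/2}`. On the imaginary axis every term of `f` is purely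
imaginary. On the semicircle `Re (1/z) = 4 Re z / π²` cancels the last term, and
`Re cot (x + iy) = sin 2x / (cosh 2y - cos 2x) ≥ 0` because `0 ≤ 2x ≤ π`.
-/

open Real

open Filter Metric Set Topology

namespace Complex

theorem cot_neg (z : ℂ) : cot (-z) = -cot z := by
  simp [cot_eq_cos_div_sin, div_neg]

theorem differentiableAt_cot {z : ℂ} (hz : sin z ≠ 0) : DifferentiableAt ℂ cot z := by
  simp only [funext cot_eq_cos_div_sin]
  exact differentiableAt_cos.div differentiableAt_sin hz

theorem re_cot (z : ℂ) :
    (cot z).re = Real.sin (2 * z.re) / (Real.cosh (2 * z.im) - Real.cos (2 * z.re)) := by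
  set x := z.re
  set y := z.im
  have hsin : sin z = ⟨Real.sin x * Real.cosh y, Real.cos x * Real.sinh y⟩ := by
    rw [sin_eq]
    apply Complex.ext <;> simp [x, y, ← ofReal_sin, ← ofReal_cos, ← ofReal_cosh, ← ofReal_sinh]
  have hcos : cos z = ⟨Real.cos x * Real.cosh y, -(Real.sin x * Real.sinh y)⟩ := by
    rw [cos_eq]
    apply Complex.ext <;> simp [x, y, ← ofReal_sin, ← ofReal_cos, ← ofReal_cosh, ← ofReal_sinh]
  have hnum : Real.cos x * Real.cosh y * (Real.sin x * Real.cosh y)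
      + -(Real.sin x * Real.sinh y) * (Real.cos x * Real.sinh y) = Real.sin x * Real.cos x := by
    linear_combination Real.sin x * Real.cos x * Real.cosh_sq_sub_sinh_sq y
  have hnormSq : Real.sin x * Real.cosh y * (Real.sin x * Real.cosh y)
      + Real.cos x * Real.sinh y * (Real.cos x * Real.sinh y) = Real.sin x ^ 2 + Real.sinh y ^ 2 := by
    linear_combination Real.sin x ^ 2 * Real.cosh_sq_sub_sinh_sq y
      + Real.sinh y ^ 2 * Real.sin_sq_add_cos_sq x
  have hden : Real.cosh (2 * y) - Real.cos (2 * x) = 2 * (Real.sin x ^ 2 + Real.sinh y ^ 2) := by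
    rw [Real.cosh_two_mul, Real.cos_two_mul]
    linear_combination Real.cosh_sq_sub_sinh_sq y - 2 * Real.sin_sq_add_cos_sq x
  rw [cot_eq_cos_div_sin, div_re, hsin, hcos, normSq_mk, ← add_div, hnum, hnormSq, hden,
    Real.sin_two_mul, mul_assoc, mul_div_mul_left _ _ two_ne_zero]

theorem re_cot_nonneg {z : ℂ} (h0 : 0 ≤ z.re) (h1 : z.re ≤ π / 2) : 0 ≤ (cot z).re := by
  rw [re_cot]
  exact div_nonneg (Real.sin_nonneg_of_nonneg_of_le_pi (by linarith) (by linarith))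
    (by linarith [Real.one_le_cosh (2 * z.im), Real.cos_le_one (2 * z.re)])

theorem sin_ne_zero_of_mem_ball {z : ℂ} (hz : z ∈ ball (0 : ℂ) π) (h0 : z ≠ 0) : sin z ≠ 0 := by
  rw [Ne, sin_eq_zero_iff]
  rintro ⟨k, rfl⟩
  have hk : k ≠ 0 := by rintro rfl; simp at h0
  have : π ≤ ‖(k : ℂ) * π‖ := by
    rw [norm_mul, norm_intCast, Complex.norm_real, Real.norm_of_nonneg pi_pos.le]
    have : (1 : ℝ) ≤ |(k : ℝ)| := by exact_mod_cast Int.one_le_abs hk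
    nlinarith [pi_pos]
  exact (mem_ball_zero_iff.1 hz).not_ge this

theorem tendsto_mul_cot_nhdsNE_zero : Tendsto (fun z => z * cot z) (𝓝[≠] 0) (𝓝 1) := by
  have hsinc : Tendsto (fun z => z⁻¹ * sin z) (𝓝[≠] 0) (𝓝 1) := by
    have h := hasDerivAt_iff_tendsto_slope.1 (hasDerivAt_sin 0)
    rw [cos_zero] at h
    exact h.congr fun z => by simp [slope_def_field, div_eq_inv_mul]
  have hcos : Tendsto cos (𝓝[≠] 0) (𝓝 1) :=
    (continuous_cos.tendsto' 0 1 cos_zero).mono_left nhdsWithin_le_nhds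
  refine ((hcos.mul (hsinc.inv₀ one_ne_zero)).congr fun z => ?_).trans (by rw [inv_one, mul_one])
  rw [cot_eq_cos_div_sin, mul_inv, inv_inv]
  ring

theorem differentiableAt_cot_sub_inv {z : ℂ} (hz : z ∈ ball (0 : ℂ) π) (h0 : z ≠ 0) :
    DifferentiableAt ℂ (fun z => cot z - 1 / z) z :=
  (differentiableAt_cot (sin_ne_zero_of_mem_ball hz h0)).sub
    ((differentiableAt_const _).div differentiableAt_id h0)

theorem tendsto_cot_sub_inv_nhdsNE_zero :
    Tendsto (fun z => cot z - 1 / z) (𝓝[≠] 0) (𝓝 0) := by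
  set g : ℂ → ℂ := fun z => cot z - 1 / z
  have hd : ∀ᶠ z in 𝓝[≠] 0, DifferentiableAt ℂ g z := by
    filter_upwards [inter_mem_nhdsWithin _ (ball_mem_nhds (0 : ℂ) pi_pos), self_mem_nhdsWithin]
      with z hz h0
    exact differentiableAt_cot_sub_inv hz.2 h0
  have hg0 : g 0 = 0 := by simp [g, cot_eq_cos_div_sin]
  have ho : (fun z => g z - g 0) =o[𝓝[≠] 0] fun z => (z - 0)⁻¹ := by
    rw [Asymptotics.isLittleO_iff_tendsto' (Eventually.of_forall fun z hz => by simp_all)]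
    refine ((tendsto_mul_cot_nhdsNE_zero.sub_const 1).congr' ?_).trans (by rw [sub_self])
    filter_upwards [self_mem_nhdsWithin] with z (hz : z ≠ 0)
    simp only [hg0, g, sub_zero, div_inv_eq_mul]
    field_simp
  have hL := tendsto_limUnder_of_differentiable_on_punctured_nhds_of_isLittleO hd ho
  -- `g` is odd, so its limit `L` at `0` satisfies `L = -L`.
  have hneg : Tendsto (fun z : ℂ => -z) (𝓝[≠] 0) (𝓝[≠] 0) :=
    tendsto_nhdsWithin_iff.2 ⟨(continuous_neg.tendsto' 0 0 neg_zero).mono_left nhdsWithin_le_nhds,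
      eventually_nhdsWithin_of_forall fun z hz => neg_ne_zero.2 hz⟩
  have hL' : Tendsto g (𝓝[≠] 0) (𝓝 (-limUnder (𝓝[≠] 0) g)) :=
    (hL.comp hneg).neg.congr fun z => by simp [g, cot_neg]; ring
  rwa [CharZero.eq_neg_self_iff.1 (tendsto_nhds_unique hL hL')] at hL

/-- In Lean `cot 0 = 0` and `1 / 0 = 0`, so this function already takes its limit value `0` at the
removable singularity. -/
theorem differentiableOn_cot_sub_inv : DifferentiableOn ℂ (fun z => cot z - 1 / z) (ball 0 π) :=
  (differentiableOn_compl_singleton_and_continuousAt_iff (ball_mem_nhds 0 pi_pos)).1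
    ⟨fun z hz => (differentiableAt_cot_sub_inv hz.1 hz.2).differentiableWithinAt,
      continuousWithinAt_compl_self.1 <| by
        simpa [ContinuousWithinAt, cot_eq_cos_div_sin] using tendsto_cot_sub_inv_nhdsNE_zero⟩

theorem le_re_of_forall_mem_frontier_le_re {E : Type*} [NormedAddCommGroup E] [NormedSpace ℂ E]
    [Nontrivial E] {f : E → ℂ} {U : Set E} (hU : Bornology.IsBounded U) (hd : DiffContOnCl ℂ f U)
    {C : ℝ} (hC : ∀ z ∈ frontier U, C ≤ (f z).re) {z : E} (hz : z ∈ closure U) :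
    C ≤ (f z).re := by
  have hexp := norm_le_of_forall_mem_frontier_norm_le hU
    (differentiable_exp.comp_diffContOnCl hd.neg) (C := Real.exp (-C))
    (fun w hw => by simpa [norm_exp] using hC w hw) hz
  simpa [norm_exp] using hexp

theorem closure_halfDisc {r : ℝ} (hr : 0 < r) :
    closure ({z : ℂ | 0 < z.re} ∩ ball 0 r) = {z | 0 ≤ z.re} ∩ closedBall 0 r := by
  have hint : interior ({z : ℂ | 0 ≤ z.re} ∩ closedBall 0 r) = {z | 0 < z.re} ∩ ball 0 r := by
    rw [interior_inter, interior_setOfPred_le_re, interior_closedBall _ hr.ne']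
  have hconv : Convex ℝ ({z : ℂ | 0 ≤ z.re} ∩ closedBall 0 r) :=
    (convex_halfSpace_re_ge 0).inter (convex_closedBall 0 r)
  rw [← hint, hconv.closure_interior_eq_closure_of_nonempty_interior, IsClosed.closure_eq]
  · exact (isClosed_le continuous_const continuous_re).inter isClosed_closedBall
  · rw [hint]
    exact ⟨(r / 2 : ℝ), by simp [abs_of_pos hr, hr]⟩

theorem frontier_halfDisc_subset {r : ℝ} (hr : 0 < r) :
    frontier ({z : ℂ | 0 < z.re} ∩ ball 0 r) ⊆ {z | z.re = 0} ∪ {z | 0 ≤ z.re} ∩ sphere 0 r := by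
  rw [((isOpen_lt continuous_const continuous_re).inter isOpen_ball).frontier_eq,
    closure_halfDisc hr]
  rintro z ⟨⟨h0 : 0 ≤ z.re, h1⟩, h2⟩
  rcases h0.eq_or_lt with h | h
  · exact Or.inl h.symm
  · exact Or.inr ⟨h0, mem_sphere_zero_iff_norm.2 <| le_antisymm (mem_closedBall_zero_iff.1 h1)
      (not_lt.1 fun hb => h2 ⟨h, mem_ball_zero_iff.2 hb⟩)⟩

theorem re_cot_sub_inv_add (z : ℂ) :
    (cot z - 1 / z + 4 * z / (π : ℂ) ^ 2).re = (cot z).re + z.re * (4 / π ^ 2 - 1 / ‖z‖ ^ 2) := by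
  rw [add_re, sub_re, one_div, inv_re, normSq_eq_norm_sq, ← ofReal_pow, div_ofReal_re]
  simp only [re_ofNat, mul_re, im_ofNat, zero_mul, sub_zero]
  ring

end Complex

theorem cot_re_lower_general (z : ℂ) (hre : 0 ≤ z.re) (habs : ‖z‖ ≤ π / 2) :
    0 ≤ (Complex.cot z - 1 / z + 4 * z / (π : ℂ) ^ 2).re := by
  have hpi : 0 < π / 2 := by positivity
  have hd : DifferentiableOn ℂ (fun z => Complex.cot z - 1 / z + 4 * z / (π : ℂ) ^ 2)
      (ball 0 π) :=
    Complex.differentiableOn_cot_sub_inv.add (by fun_prop)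
  refine Complex.le_re_of_forall_mem_frontier_le_re (U := {z : ℂ | 0 < z.re} ∩ ball 0 (π / 2))
    (isBounded_ball.subset inter_subset_right) (hd.mono ?_).diffContOnCl (fun w hw => ?_) ?_
  · rw [Complex.closure_halfDisc hpi]
    exact inter_subset_right.trans (closedBall_subset_ball (by linarith))
  · rw [Complex.re_cot_sub_inv_add]
    rcases Complex.frontier_halfDisc_subset hpi hw with hw | ⟨hw0, hw⟩
    · simp [Complex.re_cot, show w.re = 0 from hw]
    · rw [mem_sphere_zero_iff_norm.1 hw, show 4 / π ^ 2 - 1 / (π / 2) ^ 2 = 0 by ring, mul_zero,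
        add_zero]
      exact Complex.re_cot_nonneg hw0
        ((Complex.re_le_norm w).trans_eq (mem_sphere_zero_iff_norm.1 hw))
  · rw [Complex.closure_halfDisc hpi]
    exact ⟨hre, mem_closedBall_zero_iff.2 habs⟩

theorem cot_re_lower (z : ℂ) (hre : 0 ≤ z.re) (habs : ‖z‖ ≤ π / 2)
    (hsin : Complex.sin z ≠ 0) :
    0 ≤ (Complex.cot z - 1 / z + 4 * z / (π : ℂ) ^ 2).re :=
  cot_re_lower_general z hre habs
end

section
/- For every nonzero real number y, ∫_{-∞}^{∞} e^{iyu} / cosh²(u) du = πy / sinh(πy/2), and in particular this quantity is nonnegative. -/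
/-!
The logistic substitution `x = σ(t) = 1 / (1 + e⁻ᵗ)`, for which `dx = σ(t) σ(-t) dt` and
`1 - x = σ(-t)`, turns Euler's integral `B(a, b)` into `∫ σ(t)ᵃ σ(-t)ᵇ dt` over `ℝ`. For
`a = 1 + s`, `b = 1 - s` the integrand is `eˢᵗ / (4 cosh² (t / 2))`, so after `t = 2u`,
`∫ e²ˢᵘ / cosh² u du = 2 B(1 + s, 1 - s) = 2 Γ(1 + s) Γ(1 - s) = 2πs / sin (πs)`
by the reflection formula. Take `s = iy/2`.
-/

open Real MeasureTheory Set

namespace Real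

theorem sigmoid_mul_sigmoid_neg (t : ℝ) :
    sigmoid t * sigmoid (-t) = (4 * cosh (t / 2) ^ 2)⁻¹ := by
  have h₁ : exp t = exp (t / 2) ^ 2 := by rw [← exp_nat_mul]; ring_nf
  have h₂ : exp (-t) = exp (-(t / 2)) ^ 2 := by rw [← exp_nat_mul]; ring_nf
  have h₃ : exp (t / 2) * exp (-(t / 2)) = 1 := by rw [← exp_add]; simp
  rw [sigmoid_def, sigmoid_def, neg_neg, ← mul_inv, cosh_eq, h₁, h₂]
  congr 1
  linear_combination (exp (t / 2) * exp (-(t / 2)) - 1) * h₃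

theorem log_sigmoid_sub_log_sigmoid_neg (t : ℝ) : log (sigmoid t) - log (sigmoid (-t)) = t := by
  rw [← sigmoid_mul_rexp_neg t, log_mul (sigmoid_pos t).ne' (exp_pos _).ne', log_exp]
  ring

theorem div_sinh_half_nonneg (x : ℝ) : 0 ≤ x / sinh (x / 2) := by
  rcases le_total 0 x with hx | hx
  · exact div_nonneg hx (sinh_nonneg_iff.2 (by linarith))
  · exact div_nonneg_of_nonpos hx (sinh_nonpos_iff.2 (by linarith))

end Real

namespace Complex

theorem ofReal_sigmoid_cpow_mul_ofReal_sigmoid_neg_cpow (t : ℝ) (s : ℂ) :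
    (sigmoid t : ℂ) ^ (1 + s) * (sigmoid (-t) : ℂ) ^ (1 - s)
      = (sigmoid t * sigmoid (-t) : ℝ) * exp (s * t) := by
  have hx : (sigmoid t : ℂ) ≠ 0 := ofReal_ne_zero.2 (sigmoid_pos t).ne'
  have hy : (sigmoid (-t) : ℂ) ≠ 0 := ofReal_ne_zero.2 (sigmoid_pos (-t)).ne'
  have hlog : log (sigmoid t) * s - log (sigmoid (-t)) * s = s * t := by
    rw [← ofReal_log (sigmoid_pos t).le, ← ofReal_log (sigmoid_pos (-t)).le, ← sub_mul,
      ← ofReal_sub, log_sigmoid_sub_log_sigmoid_neg, mul_comm]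
  rw [cpow_add _ _ hx, cpow_sub _ _ hy, cpow_one, cpow_one, cpow_def_of_ne_zero hx,
    cpow_def_of_ne_zero hy, ← hlog, exp_sub]
  push_cast
  field_simp

theorem betaIntegral_eq_integral_sigmoid (a b : ℂ) :
    betaIntegral a b = ∫ t : ℝ, (sigmoid t : ℂ) ^ a * (sigmoid (-t) : ℂ) ^ b := by
  have hderiv (t : ℝ) (_ : t ∈ univ) :
      HasDerivWithinAt sigmoid (sigmoid t * sigmoid (-t)) univ t := by
    rw [sigmoid_neg]
    exact (hasDerivAt_sigmoid t).hasDerivWithinAt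
  have hcov := integral_image_eq_integral_abs_deriv_smul MeasurableSet.univ hderiv
    sigmoid_injective.injOn fun x : ℝ => (x : ℂ) ^ (a - 1) * (1 - (x : ℂ)) ^ (b - 1)
  rw [image_univ, range_sigmoid, Measure.restrict_univ] at hcov
  rw [betaIntegral, intervalIntegral.integral_of_le zero_le_one, integral_Ioc_eq_integral_Ioo,
    hcov]
  congr 1
  ext t
  have hx : (sigmoid t : ℂ) ≠ 0 := ofReal_ne_zero.2 (sigmoid_pos t).ne'
  have hy : (sigmoid (-t) : ℂ) ≠ 0 := ofReal_ne_zero.2 (sigmoid_pos (-t)).ne'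
  have h1 : 1 - (sigmoid t : ℂ) = sigmoid (-t) := by rw [sigmoid_neg]; push_cast; ring
  rw [abs_of_pos (mul_pos (sigmoid_pos t) (sigmoid_pos (-t))), real_smul, h1,
    cpow_sub _ _ hx, cpow_sub _ _ hy, cpow_one, cpow_one]
  push_cast
  field_simp

theorem integral_cexp_mul_div_cosh_sq (s : ℂ) :
    ∫ u : ℝ, exp (2 * s * u) / (Real.cosh u : ℂ) ^ 2 = 2 * betaIntegral (1 + s) (1 - s) := by
  set g : ℝ → ℂ := fun t => ((4 * Real.cosh (t / 2) ^ 2)⁻¹ : ℝ) * exp (s * t)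
  have hg (u : ℝ) : exp (2 * s * u) / (Real.cosh u : ℂ) ^ 2 = 4 * g (2 * u) := by
    simp only [g, mul_div_cancel_left₀ u two_ne_zero]
    push_cast
    field_simp
  calc ∫ u : ℝ, exp (2 * s * u) / (Real.cosh u : ℂ) ^ 2
      = 4 * ∫ u : ℝ, g (2 * u) := by simp_rw [hg, integral_const_mul]
    _ = 2 * ∫ t : ℝ, g t := by
      rw [Measure.integral_comp_mul_left, real_smul, abs_of_pos (by norm_num)]
      push_cast
      ring
    _ = 2 * betaIntegral (1 + s) (1 - s) := by
      simp_rw [betaIntegral_eq_integral_sigmoid, ofReal_sigmoid_cpow_mul_ofReal_sigmoid_neg_cpow,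
        sigmoid_mul_sigmoid_neg, g]

theorem betaIntegral_one_add_one_sub {s : ℂ} (hs : s ≠ 0) (hre : |s.re| < 1) :
    betaIntegral (1 + s) (1 - s) = π * s / sin (π * s) := by
  have hΓ2 : Gamma 2 = 1 := by simp
  have hΓ := Gamma_mul_Gamma_eq_betaIntegral (s := 1 + s) (t := 1 - s)
    (by simp only [add_re, one_re]; linarith [neg_abs_le s.re])
    (by simp only [sub_re, one_re, sub_pos]; linarith [le_abs_self s.re])
  rw [add_add_sub_cancel, one_add_one_eq_two, hΓ2, one_mul, add_comm 1 s,
    Gamma_add_one s hs, mul_assoc, Gamma_mul_Gamma_one_sub] at hΓ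
  rw [add_comm 1 s, ← hΓ]
  ring

end Complex

theorem fourier_sech_sq (y : ℝ) (hy : y ≠ 0) :
    (∫ u : ℝ, Complex.exp (y * u * Complex.I) / (Real.cosh u : ℂ) ^ 2)
      = ((π * y / Real.sinh (π * y / 2) : ℝ) : ℂ) ∧
    0 ≤ π * y / Real.sinh (π * y / 2) := by
  refine ⟨?_, div_sinh_half_nonneg (π * y)⟩
  set s : ℂ := y / 2 * Complex.I
  have hs : s ≠ 0 := by simp [s, hy]
  have hre : |s.re| < 1 := by simp [s]
  have hsin : Complex.sin (π * s) = Real.sinh (π * y / 2) * Complex.I := by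
    rw [show (π : ℂ) * s = (π * y / 2 : ℝ) * Complex.I by push_cast; ring, Complex.sin_mul_I,
      Complex.ofReal_sinh]
  calc ∫ u : ℝ, Complex.exp (y * u * Complex.I) / (Real.cosh u : ℂ) ^ 2
      = ∫ u : ℝ, Complex.exp (2 * s * u) / (Real.cosh u : ℂ) ^ 2 := by
        congr 1; ext u; simp only [s]; ring_nf
    _ = 2 * (π * s / Complex.sin (π * s)) := by
      rw [Complex.integral_cexp_mul_div_cosh_sq, Complex.betaIntegral_one_add_one_sub hs hre]
    _ = _ := by
      rw [hsin]
      push_cast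
      field_simp
      ring
end

section
/- Let g(u) = (cos(u tan θ) - cos θ) sec²θ for |u| ≤ θ/tan θ and g(u) = 0 otherwise, where 0 < θ < π/2, and let w = g * g be the convolution of g with itself. Then w(0) = ∫_{-∞}^{∞} g(u)² du = sec²θ (θ tan θ + 3θ cot θ - 3). -/
open Real

/-!
`g` is even, so `w(0) = ∫ g²`. On the support `[-a, a]` of `g`, `a = θ / tan θ`, the substitution
`x = u tan θ` maps the support onto `[-θ, θ]`, where `(cos x - cos θ)²` has the elementary
antiderivative `(x + sin x cos x) / 2 - 2 cos θ sin x + cos² θ x`.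
-/

theorem integral_mul_comp_zero_sub_of_even {f : ℝ → ℝ} (hf : ∀ x, f (-x) = f x) :
    ∫ v, f v * f (0 - v) = ∫ v, f v ^ 2 := by
  congr 1 with v
  rw [zero_sub, hf, sq]

theorem integral_ite_abs_le {f : ℝ → ℝ} {a : ℝ} (ha : 0 ≤ a) :
    ∫ u, (if |u| ≤ a then f u else 0) = ∫ u in -a..a, f u := by
  have hind : (fun u => if |u| ≤ a then f u else 0) = Set.indicator (Set.Icc (-a) a) f := by
    ext u
    simp only [Set.indicator, Set.mem_Icc, abs_le]
  rw [hind, MeasureTheory.integral_indicator measurableSet_Icc,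
    MeasureTheory.integral_Icc_eq_integral_Ioc,
    intervalIntegral.integral_of_le (by linarith)]

theorem integral_cos_sub_sq_symm (b c : ℝ) :
    ∫ x in -b..b, (cos x - c) ^ 2 = b + sin b * cos b - 4 * c * sin b + 2 * c ^ 2 * b := by
  have hderiv : ∀ x, HasDerivAt (fun x => (x + sin x * cos x) / 2 - 2 * c * sin x + c ^ 2 * x)
      ((cos x - c) ^ 2) x := by
    intro x
    refine (((((hasDerivAt_id' x).add ((hasDerivAt_sin x).mul (hasDerivAt_cos x))).div_const
      2).sub ((hasDerivAt_sin x).const_mul (2 * c))).add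
      ((hasDerivAt_id' x).const_mul (c ^ 2))).congr_deriv ?_
    linear_combination (-1 / 2 : ℝ) * sin_sq_add_cos_sq x
  rw [intervalIntegral.integral_eq_sub_of_hasDerivAt (fun x _ => hderiv x)
    ((by fun_prop : Continuous fun x => (cos x - c) ^ 2).intervalIntegrable _ _)]
  simp only [sin_neg, cos_neg]
  ring

theorem conv_square_at_zero (θ : ℝ) (h0 : 0 < θ) (h1 : θ < π / 2)
    (g : ℝ → ℝ)
    (hg : ∀ u : ℝ, g u = if |u| ≤ θ / Real.tan θ then
        (Real.cos (u * Real.tan θ) - Real.cos θ) / Real.cos θ ^ 2 else 0) :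
    (∫ v : ℝ, g v * g (0 - v)) = ∫ u : ℝ, g u ^ 2 ∧
    (∫ u : ℝ, g u ^ 2)
      = (θ * Real.tan θ + 3 * θ / Real.tan θ - 3) / Real.cos θ ^ 2 := by
  have hcos : 0 < cos θ := cos_pos_of_mem_Ioo ⟨by linarith [pi_pos], h1⟩
  have htan : 0 < tan θ := tan_pos_of_pos_of_lt_pi_div_two h0 h1
  have hsupport : θ / tan θ * tan θ = θ := div_mul_cancel₀ θ htan.ne'
  have heven : ∀ u, g (-u) = g u := fun u => by simp only [hg, abs_neg, neg_mul, cos_neg]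
  refine ⟨integral_mul_comp_zero_sub_of_even heven, ?_⟩
  have hsq : ∀ u, g u ^ 2 = if |u| ≤ θ / tan θ then
      ((cos (u * tan θ) - cos θ) / cos θ ^ 2) ^ 2 else 0 := fun u => by
    rw [hg]; split_ifs <;> simp
  calc ∫ u, g u ^ 2
      = ∫ u in -(θ / tan θ)..θ / tan θ, ((cos (u * tan θ) - cos θ) / cos θ ^ 2) ^ 2 := by
        simp only [hsq]; exact integral_ite_abs_le (div_pos h0 htan).le
    _ = (tan θ)⁻¹ * (∫ x in -θ..θ, (cos x - cos θ) ^ 2) / (cos θ ^ 2) ^ 2 := by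
        simp only [div_pow, intervalIntegral.integral_div,
          intervalIntegral.integral_comp_mul_right (fun x => (cos x - cos θ) ^ 2) htan.ne',
          neg_mul, hsupport, smul_eq_mul]
    _ = _ := by
        rw [integral_cos_sub_sq_symm, tan_eq_sin_div_cos]
        have hsin : 0 < sin θ := sin_pos_of_pos_of_lt_pi h0 (by linarith [pi_pos])
        field_simp
        linear_combination (-θ) * sin_sq_add_cos_sq θ
end

section
/- Let w : [0,∞) → ℝ be continuous, nonnegative, integrable with W(z) = ∫_0^∞ e^{-zu} w(u) du for Re z ≥ 0, and suppose W(z) → 0 uniformly as |z| → ∞ in the half-plane Re z ≥ 0. If Re W(iy) ≥ 0 for all real y, then Re W(z) ≥ 0 for all z with Re z ≥ 0. -/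
/-!
`W` is the Laplace transform of an integrable function, hence bounded by `∫ |w|` on the closed
right half-plane, continuous there and holomorphic inside. Thus `exp (-W)` is a bounded holomorphic
function of modulus `exp (-Re W) ≤ 1` on the imaginary axis, and the Phragmén–Lindelöf principle
for the right half-plane gives `exp (-Re W) ≤ 1`, i.e. `Re W ≥ 0`, everywhere.
-/

open MeasureTheory Complex Filter Metric Set

noncomputable def laplace (f : ℝ → ℂ) (z : ℂ) : ℂ :=
  ∫ u in Ici (0 : ℝ), cexp (-z * u) * f u

lemma norm_cexp_neg_mul_ofReal (z : ℂ) (u : ℝ) : ‖cexp (-z * u)‖ = Real.exp (-(z.re * u)) := by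
  simp [Complex.norm_exp]

lemma norm_cexp_neg_mul_ofReal_le_one {z : ℂ} (hz : 0 ≤ z.re) {u : ℝ} (hu : 0 ≤ u) :
    ‖cexp (-z * u)‖ ≤ 1 := by
  rw [norm_cexp_neg_mul_ofReal, Real.exp_le_one_iff, neg_nonpos]
  exact mul_nonneg hz hu

lemma norm_cexp_neg_mul_ofReal_mul_le {ε : ℝ} (hε : 0 < ε) {z : ℂ} (hz : ε ≤ z.re) {u : ℝ}
    (hu : 0 ≤ u) : ‖cexp (-z * u)‖ * u ≤ Real.exp (-1) / ε := by
  rw [norm_cexp_neg_mul_ofReal, le_div_iff₀ hε]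
  calc Real.exp (-(z.re * u)) * u * ε ≤ Real.exp (-(ε * u)) * u * ε := by gcongr
    _ = (ε * u) * Real.exp (-(ε * u)) := by ring
    _ ≤ Real.exp (-1) := Real.mul_exp_neg_le_exp_neg_one _

section Laplace

variable {f : ℝ → ℂ}

lemma aestronglyMeasurable_laplace_integrand (hf : IntegrableOn f (Ici 0)) (z : ℂ) :
    AEStronglyMeasurable (fun u : ℝ => cexp (-z * u) * f u) (volume.restrict (Ici 0)) :=
  (Continuous.aestronglyMeasurable (by fun_prop)).mul hf.aestronglyMeasurable

lemma norm_laplace_integrand_le {z : ℂ} (hz : 0 ≤ z.re) :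
    ∀ᵐ u : ℝ ∂volume.restrict (Ici 0), ‖cexp (-z * u) * f u‖ ≤ ‖f u‖ := by
  filter_upwards [ae_restrict_mem measurableSet_Ici] with u (hu : 0 ≤ u)
  rw [norm_mul]
  exact mul_le_of_le_one_left (norm_nonneg _) (norm_cexp_neg_mul_ofReal_le_one hz hu)

lemma integrableOn_laplace_integrand (hf : IntegrableOn f (Ici 0)) {z : ℂ} (hz : 0 ≤ z.re) :
    IntegrableOn (fun u : ℝ => cexp (-z * u) * f u) (Ici 0) :=
  hf.norm.mono' (aestronglyMeasurable_laplace_integrand hf z) (norm_laplace_integrand_le hz)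

lemma norm_laplace_le (hf : IntegrableOn f (Ici 0)) {z : ℂ} (hz : 0 ≤ z.re) :
    ‖laplace f z‖ ≤ ∫ u in Ici (0 : ℝ), ‖f u‖ :=
  norm_integral_le_of_norm_le hf.norm (norm_laplace_integrand_le hz)

lemma continuousOn_laplace (hf : IntegrableOn f (Ici 0)) :
    ContinuousOn (laplace f) {z | 0 ≤ z.re} :=
  continuousOn_of_dominated (fun z _ => aestronglyMeasurable_laplace_integrand hf z)
    (fun _ hz => norm_laplace_integrand_le hz) hf.norm
    (ae_of_all _ fun _ => Continuous.continuousOn (by fun_prop))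

lemma hasDerivAt_laplace (hf : IntegrableOn f (Ici 0)) {z₀ : ℂ} (hz₀ : 0 < z₀.re) :
    HasDerivAt (laplace f) (∫ u in Ici (0 : ℝ), cexp (-z₀ * u) * (-u) * f u) z₀ := by
  set ε := z₀.re / 2 with hε_def
  have hε : 0 < ε := half_pos hz₀
  have hball : ∀ z ∈ ball z₀ ε, ε ≤ z.re := fun z hz => by
    have := (abs_le.1 ((abs_re_le_norm (z - z₀)).trans (mem_ball_iff_norm.1 hz).le)).1
    rw [sub_re] at this
    linarith [hε_def]
  refine (hasDerivAt_integral_of_dominated_loc_of_deriv_le (ball_mem_nhds z₀ hε)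
    (F' := fun z u => cexp (-z * u) * (-u) * f u) (bound := fun u => Real.exp (-1) / ε * ‖f u‖)
    (Eventually.of_forall (aestronglyMeasurable_laplace_integrand hf))
    (integrableOn_laplace_integrand hf hz₀.le) ?_ ?_ (hf.norm.const_mul _) ?_).2
  · exact (Continuous.aestronglyMeasurable (by fun_prop)).mul hf.aestronglyMeasurable
  · filter_upwards [ae_restrict_mem measurableSet_Ici] with u (hu : 0 ≤ u) z hz
    rw [norm_mul, norm_mul, norm_neg, norm_real, Real.norm_of_nonneg hu]
    exact mul_le_mul_of_nonneg_right (norm_cexp_neg_mul_ofReal_mul_le hε (hball z hz) hu)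
      (norm_nonneg _)
  · refine ae_of_all _ fun u z _ => ?_
    simpa using ((hasDerivAt_id z).neg.mul_const (u : ℂ)).cexp.mul_const (f u)

lemma differentiableOn_laplace (hf : IntegrableOn f (Ici 0)) :
    DifferentiableOn ℂ (laplace f) {z | 0 < z.re} :=
  fun _ hz => (hasDerivAt_laplace hf hz).differentiableAt.differentiableWithinAt

lemma diffContOnCl_laplace (hf : IntegrableOn f (Ici 0)) :
    DiffContOnCl ℂ (laplace f) {z | 0 < z.re} :=
  ⟨differentiableOn_laplace hf, by rw [closure_setOfPred_lt_re]; exact continuousOn_laplace hf⟩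

end Laplace

lemma right_half_plane_re_nonneg_of_re_bddBelow {F : ℂ → ℂ}
    (hd : DiffContOnCl ℂ F {z | 0 < z.re}) (hlow : ∃ m, ∀ z : ℂ, 0 < z.re → m ≤ (F z).re)
    (him : ∀ y : ℝ, 0 ≤ (F (I * y)).re) {z : ℂ} (hz : 0 ≤ z.re) : 0 ≤ (F z).re := by
  obtain ⟨m, hm⟩ := hlow
  have hnorm (z : ℂ) : ‖cexp (-F z)‖ = Real.exp (-(F z).re) := by rw [norm_exp, neg_re]
  have hbound (z : ℂ) (hz : 0 < z.re) : ‖cexp (-F z)‖ ≤ Real.exp (-m) := by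
    rw [hnorm]
    exact Real.exp_le_exp.2 (neg_le_neg (hm z hz))
  have hexp : ∃ c < (2 : ℝ), ∃ B,
      (fun z => cexp (-F z)) =O[Bornology.cobounded ℂ ⊓ 𝓟 {z | 0 < z.re}]
        fun z => Real.exp (B * ‖z‖ ^ c) := by
    refine ⟨1, one_lt_two, 0, ?_⟩
    simp only [zero_mul, Real.exp_zero]
    exact (Asymptotics.isBigO_one_iff ℝ).2
      (isBoundedUnder_of_eventually_le (eventually_inf_principal.2 (Eventually.of_forall hbound)))
  have hre : IsBoundedUnder (· ≤ ·) atTop fun x : ℝ => ‖cexp (-F x)‖ :=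
    isBoundedUnder_of_eventually_le
      ((eventually_gt_atTop 0).mono fun x hx => hbound x (by simpa using hx))
  have him' (y : ℝ) : ‖cexp (-F (y * I))‖ ≤ 1 := by
    rw [hnorm, Real.exp_le_one_iff, neg_nonpos, mul_comm]
    exact him y
  have hd' : DiffContOnCl ℂ (fun z => cexp (-F z)) {z | 0 < z.re} :=
    ⟨hd.1.neg.cexp, hd.2.neg.cexp⟩
  have := PhragmenLindelof.right_half_plane_of_bounded_on_real hd' hexp hre him' hz
  rwa [hnorm, Real.exp_le_one_iff, neg_nonpos] at this

theorem laplace_re_nonneg_general (w : ℝ → ℝ)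
    (hint : IntegrableOn w (Set.Ici 0))
    (W : ℂ → ℂ)
    (hW : ∀ z : ℂ, W z = ∫ u in Set.Ici (0 : ℝ), Complex.exp (-z * u) * (w u : ℂ))
    (him : ∀ y : ℝ, 0 ≤ (W (Complex.I * y)).re) :
    ∀ z : ℂ, 0 ≤ z.re → 0 ≤ (W z).re := by
  obtain rfl : W = laplace (fun u => (w u : ℂ)) := funext hW
  have hf : IntegrableOn (fun u => (w u : ℂ)) (Ici 0) := hint.ofReal
  refine fun z hz => right_half_plane_re_nonneg_of_re_bddBelow (diffContOnCl_laplace hf)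
    ⟨-∫ u in Ici (0 : ℝ), ‖(w u : ℂ)‖, fun z hz => ?_⟩ him hz
  exact neg_le_of_abs_le ((abs_re_le_norm _).trans (norm_laplace_le hf hz.le))

theorem laplace_re_nonneg (w : ℝ → ℝ)
    (hcont : ContinuousOn w (Set.Ici 0))
    (hnonneg : ∀ u : ℝ, 0 ≤ u → 0 ≤ w u)
    (hint : IntegrableOn w (Set.Ici 0))
    (W : ℂ → ℂ)
    (hW : ∀ z : ℂ, W z = ∫ u in Set.Ici (0 : ℝ), Complex.exp (-z * u) * (w u : ℂ))
    (hdecay : ∀ ε > (0 : ℝ), ∃ R : ℝ, ∀ z : ℂ, 0 ≤ z.re → R ≤ ‖z‖ →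
      ‖W z‖ < ε)
    (him : ∀ y : ℝ, 0 ≤ (W (Complex.I * y)).re) :
    ∀ z : ℂ, 0 ≤ z.re → 0 ≤ (W z).re :=
  laplace_re_nonneg_general w hint W hW him
end
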